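/- arXiv:2002.06764 — 2 statements merged into one kernel-verified Lean document; each statement's English description precedes it below -/
import Mathlib

section
/- Let ≈ be an SCER and T a string of length n. If k ≤ l, S is a ≈-cover of T[1:n−k], and S is a left ≈-seed of the suffix T[n−l+1:n], then S is a left ≈-seed of T. -/
variable {α : Type*}

/-- `substr X i j` is the 1-indexed inclusive substring `X[i:j]`. -/
def substr (X : List α) (i j : ℕ) : List α := (X.take j).drop (i - 1)

/-- A substring consistent equivalence relation (SCER). -/
structure SCER (r : List α → List α → Prop) : Prop where
  equiv : Equivalence r
  length_eq : ∀ X Y, r X Y → X.length = Y.length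
  substr_congr : ∀ X Y, r X Y → ∀ i j, 1 ≤ i → i ≤ j → j ≤ X.length →
    r (substr X i j) (substr Y i j)

/-- `B` is a `≈`-border of `T`: `B` is equivalent to a prefix and a suffix of `T`. -/
def IsBorder (r : List α → List α → Prop) (B T : List α) : Prop :=
  B.length ≤ T.length ∧ r B (T.take B.length) ∧ r B (T.drop (T.length - B.length))

/-- `C` is a `≈`-cover of `T`: there are occurrences `x 1 = 1 < ... < x m = |T|-|C|+1`
with consecutive gaps at most `|C|`. -/
def IsCover (r : List α → List α → Prop) (C T : List α) : Prop :=
  ∃ (m : ℕ) (x : ℕ → ℕ), 1 ≤ m ∧ x 1 = 1 ∧ x m = T.length - C.length + 1 ∧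
    (∀ k, 1 ≤ k → k ≤ m → r C (substr T (x k) (x k + C.length - 1))) ∧
    (∀ k, 1 < k → k ≤ m → x (k - 1) < x k ∧ x k ≤ x (k - 1) + C.length)

def IsProperCover (r : List α → List α → Prop) (C T : List α) : Prop :=
  IsCover r C T ∧ C.length < T.length

/-- A string is primitive if it has no proper `≈`-cover. -/
def Primitive (r : List α → List α → Prop) (T : List α) : Prop :=
  ¬ ∃ C : List α, IsProperCover r C T

/-- `S` is a left `≈`-seed of `T`. -/
def IsLeftSeed (r : List α → List α → Prop) (S T : List α) : Prop :=
  ∃ k l, k ≤ l ∧ l < S.length ∧ IsCover r S (T.take (T.length - k)) ∧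
    r (S.take l) (T.drop (T.length - l))

/-- `Bd` is the `≈`-border array of `T`:
`Bd i` is the maximum length of a proper `≈`-border of `T[1:i]`. -/
def BorderArr (r : List α → List α → Prop) (T : List α) (Bd : ℕ → ℕ) : Prop :=
  ∀ i, 1 ≤ i → i ≤ T.length →
    IsGreatest {b | ∃ B : List α, B.length = b ∧ b < i ∧ IsBorder r B (T.take i)} (Bd i)

/-- `L` is the longest `≈`-cover array of `T`:
`L i = max({|C| : C proper ≈-cover of T[1:i]} ∪ {0})`. -/
def LCoverArr (r : List α → List α → Prop) (T : List α) (L : ℕ → ℕ) : Prop :=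
  ∀ i, 1 ≤ i → i ≤ T.length →
    IsGreatest (insert 0 {c | ∃ C : List α, C.length = c ∧ IsProperCover r C (T.take i)})
      (L i)

/-!
Write `n = |T|` and let `(k', l')` witness that `S` is a left seed of `U = T[n-l+1:n]`. The
suffix of `U` of length `l'` is a suffix of `T`, so if `k ≤ l'` the pair `(k, l')` works for `T`.
Otherwise `k' < k ≤ l`, and the cover of `T[1:n-k]` glues with the cover of
`U[1:l-k'] = T[n-l+1:n-k']` (which starts no later than position `n-k+1`) into a cover of
`T[1:n-k']`, so the pair `(k', l')` works for `T`.
-/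

lemma substr_take {X : List α} (i : ℕ) {j t : ℕ} (h : j ≤ t) :
    substr (X.take t) i j = substr X i j := by
  rw [substr, List.take_take, min_eq_left h, substr]

lemma substr_drop {X : List α} {i : ℕ} (j d : ℕ) (hi : 1 ≤ i) :
    substr (X.drop d) i j = substr X (d + i) (d + j) := by
  rw [substr, List.take_drop, List.drop_drop, substr]
  congr 1
  omega

def IsCoveringSeq (P : ℕ → Prop) (s p q : ℕ) : Prop :=
  ∃ (m : ℕ) (x : ℕ → ℕ), 1 ≤ m ∧ x 1 = p ∧ x m = q ∧ (∀ i, 1 ≤ i → i ≤ m → P (x i)) ∧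
    (∀ i, 1 < i → i ≤ m → x (i - 1) < x i ∧ x i ≤ x (i - 1) + s)

lemma le_of_lt_pred {x : ℕ → ℕ} {m : ℕ} (hx : ∀ i, 1 < i → i ≤ m → x (i - 1) < x i)
    {i j : ℕ} (hi : 1 ≤ i) (hij : i ≤ j) (hj : j ≤ m) : x i ≤ x j := by
  induction j, hij using Nat.le_induction with
  | base => rfl
  | succ j hij ih =>
    have := hx (j + 1) (by omega) hj
    simp only [Nat.add_sub_cancel] at this
    exact (ih (by omega)).trans this.le

namespace IsCoveringSeq

variable {P Q : ℕ → Prop} {s p q p' q' : ℕ}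

lemma mono (hc : IsCoveringSeq P s p q) (hPQ : ∀ y, p ≤ y → y ≤ q → P y → Q y) :
    IsCoveringSeq Q s p q := by
  obtain ⟨m, x, hm, hx1, hxm, hP, hstep⟩ := hc
  have hlt := fun i hi him => (hstep i hi him).1
  refine ⟨m, x, hm, hx1, hxm, fun i hi him => hPQ _ ?_ ?_ (hP i hi him), hstep⟩
  · exact hx1 ▸ le_of_lt_pred hlt le_rfl hi him
  · exact hxm ▸ le_of_lt_pred hlt hi him le_rfl

lemma add_left (b : ℕ) (hc : IsCoveringSeq (fun y => P (b + y)) s p q) :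
    IsCoveringSeq P s (b + p) (b + q) := by
  obtain ⟨m, x, hm, hx1, hxm, hP, hstep⟩ := hc
  refine ⟨m, fun i => b + x i, hm, congrArg (b + ·) hx1, congrArg (b + ·) hxm, hP,
    fun i hi him => ?_⟩
  have := hstep i hi him
  dsimp only
  omega

lemma append (h₁ : IsCoveringSeq P s p q) (h₂ : IsCoveringSeq P s p' q') (hlt : q < p')
    (hle : p' ≤ q + s) : IsCoveringSeq P s p q' := by
  obtain ⟨m, x, hm, hx1, hxm, hP, hstep⟩ := h₁
  obtain ⟨m', y, hm', hy1, hym, hP', hstep'⟩ := h₂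
  refine ⟨m + m', fun i => if i ≤ m then x i else y (i - m), by omega,
    by simp [hm, hx1], by simp [show ¬ m + m' ≤ m by omega, hym], fun i hi him => ?_,
    fun i hi him => ?_⟩
  · by_cases him' : i ≤ m
    · simpa [him'] using hP i hi him'
    · simpa [him'] using hP' (i - m) (by omega) (by omega)
  · rcases lt_trichotomy i (m + 1) with hi' | rfl | hi'
    · simpa [show i ≤ m by omega, show i - 1 ≤ m by omega] using hstep i hi (by omega)
    · simp [hxm, hy1, hlt, hle]
    · have := hstep' (i - m) (by omega) (by omega)
      simp only [show ¬ i ≤ m by omega, show ¬ i - 1 ≤ m by omega, if_false]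
      rwa [show i - 1 - m = i - m - 1 by omega]

-- The suffix starts at the first position beyond `t`.
lemma exists_suffix (hc : IsCoveringSeq P s p q) {t : ℕ} (htq : t < q) (hpt : p ≤ t + s) :
    ∃ u, t < u ∧ u ≤ t + s ∧ IsCoveringSeq P s u q := by
  obtain ⟨m, x, hm, hx1, hxm, hP, hstep⟩ := hc
  have hex : ∃ j, 1 ≤ j ∧ j ≤ m ∧ t < x j := ⟨m, hm, le_rfl, hxm ▸ htq⟩
  obtain ⟨hj1, hjm, htx⟩ := Nat.find_spec hex
  set j := Nat.find hex
  have hxj : x j ≤ t + s := by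
    by_cases hj : j = 1
    · rwa [hj, hx1]
    · have hprev : x (j - 1) ≤ t := by
        by_contra hlt
        exact Nat.find_min hex (show j - 1 < j by omega) ⟨by omega, by omega, by omega⟩
      have := hstep j (by omega) hjm
      omega
  refine ⟨x j, htx, hxj, m - j + 1, fun i => x (j - 1 + i), by omega,
    by simp [show j - 1 + 1 = j by omega], by simp [show j - 1 + (m - j + 1) = m by omega, hxm],
    fun i hi him => hP _ (by omega) (by omega), fun i hi him => ?_⟩
  simpa only [show j - 1 + (i - 1) = j - 1 + i - 1 by omega] using hstep _ (by omega) (by omega)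

lemma trans (h₁ : IsCoveringSeq P s p q) (h₂ : IsCoveringSeq P s p' q') (hp' : p' ≤ q + s)
    (hq : q < q') : IsCoveringSeq P s p q' :=
  let ⟨_, hqu, hus, hu⟩ := h₂.exists_suffix hq hp'
  h₁.append hu hqu hus

end IsCoveringSeq

section Cover

variable {r : List α → List α → Prop}

lemma isCover_iff_isCoveringSeq {C T : List α} :
    IsCover r C T ↔
      IsCoveringSeq (fun p => r C (substr T p (p + C.length - 1))) C.length 1
        (T.length - C.length + 1) :=
  Iff.rfl

lemma IsCover.length_le (h : SCER r) {C T : List α} (hc : IsCover r C T) :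
    C.length ≤ T.length := by
  obtain ⟨m, x, hm, hx1, hxm, hocc, -⟩ := hc
  have := h.length_eq _ _ (hocc m hm le_rfl)
  simp only [substr, List.length_drop, List.length_take] at this
  omega

lemma IsCover.glue (h : SCER r) {S T : List α} {a b c : ℕ} (hba : b ≤ a) (hac : a < c)
    (hc : c ≤ T.length) (h₁ : IsCover r S (T.take a))
    (h₂ : IsCover r S ((T.drop b).take (c - b))) : IsCover r S (T.take c) := by
  set s := S.length
  have hsa : s ≤ a := by simpa [show a ≤ T.length by omega] using h₁.length_le h
  have hscb : s ≤ c - b := by simpa [show c - b ≤ T.length - b by omega] using h₂.length_le h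
  rw [isCover_iff_isCoveringSeq] at h₁ h₂ ⊢
  simp only [List.length_take, List.length_drop, show min a T.length = a by omega,
    show min c T.length = c by omega, show min (c - b) (T.length - b) = c - b by omega] at h₁ h₂ ⊢
  have c₁ := h₁.mono fun y _ hy occ => by
    rwa [substr_take _ (by omega : y + s - 1 ≤ a), ← substr_take (t := c) _ (by omega)] at occ
  have c₂ := IsCoveringSeq.add_left (P := fun y => r S (substr (T.take c) y (y + s - 1))) b <|
    h₂.mono fun y hy1 hy occ => by
      rwa [substr_take _ (by omega), substr_drop _ _ hy1, ← substr_take (t := c) _ (by omega),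
        show b + (y + s - 1) = b + y + s - 1 by omega] at occ
  rw [show c - s + 1 = b + (c - b - s + 1) by omega]
  exact c₁.trans c₂ (by omega) (by omega)

end Cover

theorem stmt13 (r : List α → List α → Prop) (h : SCER r) (T S : List α) (k l : ℕ)
    (hkl : k ≤ l) (hl : l ≤ T.length)
    (h1 : IsCover r S (T.take (T.length - k)))
    (h2 : IsLeftSeed r S (T.drop (T.length - l))) :
    IsLeftSeed r S T := by
  obtain ⟨k', l', hk'l', hl'S, hcov, hsuf⟩ := h2
  set n := T.length
  have hU : (T.drop (n - l)).length = l := by simp only [List.length_drop]; omega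
  rw [hU] at hcov hsuf
  have hl'l : l' ≤ l := by
    have := h.length_eq _ _ hsuf
    simp only [List.length_take, List.length_drop, hU] at this
    omega
  rw [List.drop_drop, show n - l + (l - l') = n - l' by omega] at hsuf
  by_cases hkl' : k ≤ l'
  · exact ⟨k, l', hkl', hl'S, h1, hsuf⟩
  · refine ⟨k', l', hk'l', hl'S, IsCover.glue h (a := n - k) (b := n - l) (by omega) (by omega)
      (by omega) h1 ?_, hsuf⟩
    rwa [show n - k' - (n - l) = l - k' by omega]
end

section
/- Let ≈ be an SCER, T a string, and 1 ≤ i ≤ n. For any 1 ≤ j < i − Border_T[i], the prefix T[1:j] is a left ≈-seed of T[1:i] if and only if T[1:j] is the longest proper ≈-cover of some prefix T[1:m] which is itself a left ≈-seed of T[1:i]. -/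
/-!
If `S = T[1:j]` is a left seed of `T[1:i]` with witnesses `k ≤ l`, then `T[1:i]` has a border
of length `l ≤ Border_T[i] < i - j`, so `S` covers the prefix `T[1:i-k]`, which is longer than `S`.
Among the prefixes `M` with `S` covering `M` and `M` covering `T[1:i-k]`, the shortest one has
`S` as its longest proper cover: a longer proper cover `C` of `M` is also covered by `S` (two
covers of one string, the shorter covers the longer) and covers `T[1:i-k]`, so the prefix
`T[1:|C|]` would be a shorter such `M`. This `M` is a left seed with the same witnesses.

Conversely, a cover `S` of a left seed `M` is itself a left seed. If the witness `l` of `M` is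
at least `|S|`, let `e ≤ l` be maximal with `S` covering `T[1:e]`. An occurrence `T[y+1:y+|S|]`
of `S` covering position `e + 1` must end beyond `l`, so `l - y < |S|` is a new border witness,
and the copy of `T[1:e]` that the border places at the end of `T[1:i]` extends the covered
prefix up to `i - min(k, l - e)`.
-/

variable {α : Type*}

theorem substr_succ (X : List α) (x n : ℕ) : substr X (x + 1) (x + n) = (X.drop x).take n := by
  simp [substr, List.drop_take]

theorem substr_one (X : List α) (n : ℕ) : substr X 1 n = X.take n := by
  simp [substr]

namespace SCER

variable {r : List α → List α → Prop} (h : SCER r) {X Y : List α}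
include h

theorem rel_take (hXY : r X Y) (n : ℕ) : r (X.take n) (Y.take n) := by
  have hlen := h.length_eq X Y hXY
  rcases Nat.eq_zero_or_pos n with rfl | hn
  · simpa using h.equiv.refl []
  rcases le_or_gt X.length n with hXn | hnX
  · rwa [List.take_of_length_le hXn, List.take_of_length_le (hlen ▸ hXn)]
  · simpa only [substr_one] using h.substr_congr X Y hXY 1 n le_rfl hn hnX.le

theorem rel_drop (hXY : r X Y) (a : ℕ) : r (X.drop a) (Y.drop a) := by
  have hlen := h.length_eq X Y hXY
  rcases le_or_gt X.length a with hXa | haX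
  · rw [List.drop_of_length_le hXa, List.drop_of_length_le (hlen ▸ hXa)]
    exact h.equiv.refl []
  · have := h.substr_congr X Y hXY (a + 1) X.length (by omega) haX le_rfl
    rwa [substr, substr, List.take_length, hlen, List.take_length, Nat.add_sub_cancel] at this

end SCER

theorem exists_chain_of_step {P : ℕ → Prop} {a b c : ℕ} (hab : a ≤ b) (ha : P a)
    (hstep : ∀ s, P s → s < b → ∃ t, P t ∧ s < t ∧ t ≤ s + c ∧ t ≤ b) :
    ∃ (m : ℕ) (x : ℕ → ℕ), 1 ≤ m ∧ x 1 = a ∧ x m = b ∧ (∀ k, 1 ≤ k → k ≤ m → P (x k)) ∧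
      ∀ k, 1 < k → k ≤ m → x (k - 1) < x k ∧ x k ≤ x (k - 1) + c := by
  induction hd : b - a using Nat.strong_induction_on generalizing a with
  | _ d ih =>
    rcases hab.eq_or_lt with rfl | hlt
    · exact ⟨1, fun _ => a, le_rfl, rfl, rfl, fun _ _ _ => ha, by omega⟩
    obtain ⟨t, ht, hat, htc, htb⟩ := hstep a ha hlt
    obtain ⟨m, x, hm, hx1, hxm, hP, hgap⟩ := ih (b - t) (by omega) htb ht rfl
    refine ⟨m + 1, fun k => if k = 1 then a else x (k - 1), by omega, by simp, ?_, ?_, ?_⟩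
    · simp [show m ≠ 0 by omega, hxm]
    · intro k hk1 hkm
      by_cases hk : k = 1
      · simpa [hk] using ha
      · simpa [hk] using hP (k - 1) (by omega) (by omega)
    · intro k hk1 hkm
      by_cases hk : k = 2
      · subst hk
        simp [hx1, hat, htc]
      · have := hgap (k - 1) (by omega) (by omega)
        simp only [show k ≠ 1 by omega, show k - 1 ≠ 1 by omega, if_false]
        grind

theorem exists_window_of_chain (x : ℕ → ℕ) {c m p : ℕ} (hm : 1 ≤ m)
    (hgap : ∀ k, 1 < k → k ≤ m → x k ≤ x (k - 1) + c) (hp1 : x 1 ≤ p) (hpm : p < x m + c) :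
    ∃ k, 1 ≤ k ∧ k ≤ m ∧ x k ≤ p ∧ p < x k + c := by
  induction m, hm using Nat.le_induction with
  | base => exact ⟨1, le_rfl, le_rfl, hp1, hpm⟩
  | succ m hm ih =>
    by_cases hpm' : p < x m + c
    · obtain ⟨k, hk1, hkm, hk⟩ := ih (fun k hk1 hkm => hgap k hk1 (by omega)) hpm'
      exact ⟨k, hk1, by omega, hk⟩
    · have := hgap (m + 1) (by omega) le_rfl
      rw [Nat.add_sub_cancel] at this
      exact ⟨m + 1, by omega, le_rfl, by omega, hpm⟩

/-- Unlike `substr` and `IsCover`, positions here are 0-indexed. -/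
def OccursAt (r : List α → List α → Prop) (C X : List α) (x : ℕ) : Prop :=
  x + C.length ≤ X.length ∧ r C ((X.drop x).take C.length)

section Occurrences

variable {r : List α → List α → Prop} {C X Y : List α} {x : ℕ}

theorem occursAt_take_iff {n : ℕ} (hn : x + C.length ≤ n) :
    OccursAt r C (X.take n) x ↔ OccursAt r C X x := by
  simp only [OccursAt, List.length_take, List.drop_take, List.take_take]
  rw [min_eq_left (by omega : C.length ≤ n - x)]
  constructor <;> rintro ⟨h1, h2⟩ <;> exact ⟨by omega, h2⟩

theorem occursAt_drop_iff {d : ℕ} (hd : d ≤ X.length) :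
    OccursAt r C (X.drop d) x ↔ OccursAt r C X (d + x) := by
  simp only [OccursAt, List.length_drop, List.drop_drop]
  constructor <;> rintro ⟨h1, h2⟩ <;> exact ⟨by omega, h2⟩

theorem OccursAt.of_rel (h : SCER r) (hXY : r X Y) (ho : OccursAt r C X x) :
    OccursAt r C Y x :=
  ⟨h.length_eq X Y hXY ▸ ho.1, h.equiv.trans ho.2 (h.rel_take (h.rel_drop hXY x) _)⟩

theorem OccursAt.trans (h : SCER r) {U : List α} {y : ℕ} (hXU : OccursAt r X U x)
    (hCX : OccursAt r C X y) : OccursAt r C U (x + y) := by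
  have := hCX.of_rel h hXU.2
  rwa [occursAt_take_iff hCX.1, occursAt_drop_iff (by have := hXU.1; omega)] at this

theorem isCover_of_forall_exists_occursAt (hC : 0 < C.length) (hCX : C.length ≤ X.length)
    (hpos : ∀ p < X.length, ∃ x ≤ p, p < x + C.length ∧ OccursAt r C X x) : IsCover r C X := by
  have hfirst : OccursAt r C X 0 := by
    obtain ⟨x, hx, -, ho⟩ := hpos 0 (by omega)
    rwa [Nat.le_zero.1 hx] at ho
  obtain ⟨m, x, hm, hx1, hxm, hocc, hgap⟩ :=
    exists_chain_of_step (c := C.length) (Nat.zero_le (X.length - C.length)) hfirst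
      fun s hs hsb => by
        obtain ⟨t, hts, hst, ht⟩ := hpos (s + C.length) (by omega)
        exact ⟨t, ht, by omega, hts, by have := ht.1; omega⟩
  refine ⟨m, fun k => x k + 1, hm, by simp [hx1], by simp [hxm], fun k hk1 hkm => ?_,
    fun k hk1 hkm => by simp only; have := hgap k hk1 hkm; omega⟩
  rw [show x k + 1 + C.length - 1 = x k + C.length by omega, substr_succ]
  exact (hocc k hk1 hkm).2

end Occurrences

section Covers

variable {r : List α → List α → Prop} (h : SCER r) {C D X Y U : List α}
include h

theorem IsCover.isBorder (hcov : IsCover r C X) : IsBorder r C X := by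
  obtain ⟨m, x, hm, hx1, hxm, hocc, -⟩ := hcov
  have hfirst := hocc 1 le_rfl hm
  rw [hx1, Nat.add_sub_cancel_left, substr_one] at hfirst
  have hle : C.length ≤ X.length := by
    have := h.length_eq _ _ hfirst
    simp only [List.length_take] at this
    omega
  have hlast := hocc m hm le_rfl
  rw [hxm, show X.length - C.length + 1 + C.length - 1 = X.length by omega, substr,
    List.take_length, Nat.add_sub_cancel] at hlast
  exact ⟨hle, hfirst, hlast⟩

theorem IsCover.rel_take_length {n : ℕ} (hcov : IsCover r C (U.take n)) :
    r C (U.take C.length) := by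
  obtain ⟨hle, hpre, -⟩ := hcov.isBorder h
  rwa [List.take_take, min_eq_left (by simp only [List.length_take] at hle; omega)] at hpre

theorem IsCover.exists_occursAt (hcov : IsCover r C X) {p : ℕ} (hp : p < X.length) :
    ∃ x ≤ p, p < x + C.length ∧ OccursAt r C X x := by
  have hCX := (hcov.isBorder h).1
  obtain ⟨m, x, hm, hx1, hxm, hocc, hgap⟩ := hcov
  obtain ⟨k, hk1, hkm, hkp, hpk⟩ := exists_window_of_chain x hm
    (fun k hk1 hkm => (hgap k hk1 hkm).2) (p := p + 1) (by omega) (by omega)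
  have ho := hocc k hk1 hkm
  have hlen := h.length_eq _ _ ho
  simp only [substr, List.length_drop, List.length_take] at hlen
  obtain ⟨y, hy⟩ : ∃ y, x k = y + 1 := ⟨x k - 1, by omega⟩
  rw [hy, show y + 1 + C.length - 1 = y + C.length by omega, substr_succ] at ho
  exact ⟨y, by omega, by omega, by omega, ho⟩

theorem isCover_self (X : List α) : IsCover r X X :=
  ⟨1, fun _ => 1, le_rfl, rfl, by simp, fun _ _ _ => by simpa [substr] using h.equiv.refl X,
    by omega⟩

theorem IsCover.congr_left {C' : List α} (hCC' : r C C') (hcov : IsCover r C X) :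
    IsCover r C' X := by
  obtain ⟨m, x, hm, hx1, hxm, hocc, hgap⟩ := hcov
  have hlen := h.length_eq _ _ hCC'
  refine ⟨m, x, hm, hx1, hlen ▸ hxm, fun k hk1 hkm => ?_, hlen ▸ hgap⟩
  rw [← hlen]
  exact h.equiv.trans (h.equiv.symm hCC') (hocc k hk1 hkm)

theorem IsCover.congr_right (hC : 0 < C.length) (hXY : r X Y) (hcov : IsCover r C X) :
    IsCover r C Y := by
  have hlen := h.length_eq _ _ hXY
  refine isCover_of_forall_exists_occursAt hC (hlen ▸ (hcov.isBorder h).1) fun p hp => ?_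
  obtain ⟨x, hxp, hpx, ho⟩ := hcov.exists_occursAt h (hlen ▸ hp)
  exact ⟨x, hxp, hpx, ho.of_rel h hXY⟩

theorem IsCover.trans (hC : 0 < C.length) (hCX : IsCover r C X) (hXU : IsCover r X U) :
    IsCover r C U := by
  have hCX' := (hCX.isBorder h).1
  refine isCover_of_forall_exists_occursAt hC (hCX'.trans (hXU.isBorder h).1) fun p hp => ?_
  obtain ⟨x, hxp, hpx, hoX⟩ := hXU.exists_occursAt h hp
  obtain ⟨y, hyp, hpy, hoC⟩ := hCX.exists_occursAt h (p := p - x) (by omega)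
  exact ⟨x + y, by omega, by omega, hoX.trans h hoC⟩

theorem IsCover.of_isCover_of_length_le (hC : 0 < C.length) (hCX : IsCover r C X)
    (hDX : IsCover r D X) (hCD : C.length ≤ D.length) : IsCover r C D := by
  obtain ⟨hDX', hDpre, hDsuf⟩ := hDX.isBorder h
  obtain ⟨-, -, hCsuf⟩ := hCX.isBorder h
  -- `C` is a suffix of `X`, hence of the copy `X.take D.length` of `D`
  have hlast : OccursAt r C (X.take D.length) (D.length - C.length) := by
    have hsuf := h.rel_drop (h.equiv.trans (h.equiv.symm hDsuf) hDpre) (D.length - C.length)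
    rw [List.drop_drop, show X.length - D.length + (D.length - C.length)
      = X.length - C.length by omega] at hsuf
    refine ⟨by simp only [List.length_take]; omega, ?_⟩
    rw [List.take_of_length_le (by simp only [List.length_take, List.length_drop]; omega)]
    exact h.equiv.trans hCsuf hsuf
  refine (isCover_of_forall_exists_occursAt hC (by simp only [List.length_take]; omega)
    fun p hp => ?_).congr_right h hC (h.equiv.symm hDpre)
  simp only [List.length_take] at hp
  obtain ⟨y, hyp, hpy, ho⟩ := hCX.exists_occursAt h (p := p) (by omega)
  by_cases hy : y + C.length ≤ D.length
  · exact ⟨y, hyp, hpy, (occursAt_take_iff hy).2 ho⟩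
  · exact ⟨D.length - C.length, by omega, by omega, hlast⟩

theorem IsCover.take_add_of_occursAt (hC : 0 < C.length) {a d : ℕ}
    (hCa : IsCover r C (U.take a)) (hXU : OccursAt r X U d) (hCX : IsCover r C X)
    (hda : d ≤ a) (had : a ≤ d + X.length) : IsCover r C (U.take (d + X.length)) := by
  have hXU' := hXU.1
  refine isCover_of_forall_exists_occursAt hC
    (by have := (hCX.isBorder h).1; simp only [List.length_take]; omega) fun p hp => ?_
  simp only [List.length_take] at hp
  by_cases hpa : p < a
  · obtain ⟨y, hyp, hpy, ho⟩ :=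
      hCa.exists_occursAt h (p := p) (by simp only [List.length_take]; omega)
    have hya : y + C.length ≤ a := by
      have := ho.1
      simp only [List.length_take] at this
      omega
    exact ⟨y, hyp, hpy, (occursAt_take_iff (by omega)).2 ((occursAt_take_iff hya).1 ho)⟩
  · obtain ⟨z, hzp, hpz, ho⟩ := hCX.exists_occursAt h (p := p - d) (by omega)
    exact ⟨d + z, by omega, by omega,
      (occursAt_take_iff (by have := ho.1; omega)).2 (hXU.trans h ho)⟩

end Covers

def IsLongestProperCover (r : List α → List α → Prop) (S M : List α) : Prop :=
  IsProperCover r S M ∧ ∀ C, IsProperCover r C M → C.length ≤ S.length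

section LeftSeeds

variable {r : List α → List α → Prop} (h : SCER r) {S M U X : List α}
include h

theorem IsCover.exists_take_isLongestProperCover (hS : 0 < S.length) (hSX : IsCover r S X)
    (hlt : S.length < X.length) :
    ∃ m ≤ X.length, IsLongestProperCover r S (X.take m) ∧ IsCover r (X.take m) X := by
  classical
  let P m := S.length < m ∧ m ≤ X.length ∧ IsCover r S (X.take m) ∧ IsCover r (X.take m) X
  have hex : ∃ m, P m := ⟨X.length, hlt, le_rfl, by rwa [List.take_length],
    by rw [List.take_length]; exact isCover_self h X⟩
  obtain ⟨hSm, hmX, hcovS, hcovm⟩ := Nat.find_spec hex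
  refine ⟨Nat.find hex, hmX,
    ⟨⟨hcovS, by rwa [List.length_take_of_le hmX]⟩, fun C ⟨hCm, hClt⟩ => ?_⟩, hcovm⟩
  by_contra! hSC
  rw [List.length_take_of_le hmX] at hClt
  have hcovC : IsCover r (X.take C.length) (X.take (Nat.find hex)) :=
    hCm.congr_left h (hCm.rel_take_length h)
  have hlenC : (X.take C.length).length = C.length := List.length_take_of_le (by omega)
  exact Nat.find_min hex hClt ⟨hSC, by omega,
    hcovS.of_isCover_of_length_le h hS hcovC (by omega), hcovC.trans h (by omega) hcovm⟩

theorem isLeftSeed_iff : IsLeftSeed r S U ↔ ∃ k l, k ≤ l ∧ l < S.length ∧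
    IsCover r S (U.take (U.length - k)) ∧ r (U.take l) (U.drop (U.length - l)) := by
  have hpre : ∀ k l, l < S.length → IsCover r S (U.take (U.length - k)) →
      r (S.take l) (U.take l) := fun k l hl hcov => by
    simpa [List.take_take, hl.le] using h.rel_take (hcov.rel_take_length h) l
  constructor
  · rintro ⟨k, l, hkl, hl, hcov, hsuf⟩
    exact ⟨k, l, hkl, hl, hcov, h.equiv.trans (h.equiv.symm (hpre k l hl hcov)) hsuf⟩
  · rintro ⟨k, l, hkl, hl, hcov, hsuf⟩
    exact ⟨k, l, hkl, hl, hcov, h.equiv.trans (hpre k l hl hcov) hsuf⟩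

theorem isBorder_take {l : ℕ} (hl : l ≤ U.length)
    (hbord : r (U.take l) (U.drop (U.length - l))) : IsBorder r (U.take l) U := by
  rw [IsBorder, List.length_take_of_le hl]
  exact ⟨hl, h.equiv.refl _, hbord⟩

theorem rel_take_drop_sub_of_occursAt {l y : ℕ} (hSU : r S (U.take S.length))
    (hbord : r (U.take l) (U.drop (U.length - l))) (hlU : l ≤ U.length)
    (ho : OccursAt r S U y) (hyl : y ≤ l) (hly : l < y + S.length) :
    r (U.take (l - y)) (U.drop (U.length - (l - y))) := by
  have hS : r (S.take (l - y)) (U.take (l - y)) := by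
    simpa [List.take_take, show l - y ≤ S.length by omega] using h.rel_take hSU (l - y)
  have hocc : r (S.take (l - y)) ((U.take l).drop y) := by
    have := h.rel_take ho.2 (l - y)
    rwa [List.take_take, min_eq_left (by omega), ← List.drop_take] at this
  have hsuf : r ((U.take l).drop y) (U.drop (U.length - (l - y))) := by
    have := h.rel_drop hbord y
    rwa [List.drop_drop, show U.length - l + y = U.length - (l - y) by omega] at this
  exact h.equiv.trans (h.equiv.symm hS) (h.equiv.trans hocc hsuf)

theorem IsCover.exists_occursAt_straddle (hS : 0 < S.length) {n l : ℕ}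
    (hcov : IsCover r S (U.take n)) (hSl : S.length ≤ l) (hln : l < n) (hnU : n ≤ U.length) :
    ∃ y e, y ≤ e ∧ e ≤ l ∧ l < y + S.length ∧ OccursAt r S U y ∧ IsCover r S (U.take e) := by
  classical
  have hpre : IsCover r S (U.take S.length) :=
    (isCover_self h S).congr_right h hS (hcov.rel_take_length h)
  set e := Nat.findGreatest (fun e => IsCover r S (U.take e)) l
  have he : IsCover r S (U.take e) :=
    Nat.findGreatest_spec (P := fun e => IsCover r S (U.take e)) hSl hpre
  have hel : e ≤ l := Nat.findGreatest_le l
  obtain ⟨y, hye, hey, ho⟩ :=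
    hcov.exists_occursAt h (p := e) (by simp only [List.length_take]; omega)
  have ho' : OccursAt r S U y := by
    refine (occursAt_take_iff ?_).1 ho
    have := ho.1
    simp only [List.length_take] at this
    omega
  refine ⟨y, e, hye, hel, ?_, ho', he⟩
  -- an occurrence covering position `e` and ending by `l` would extend the cover of `U.take e`
  by_contra! hyl
  exact Nat.findGreatest_is_greatest (show e < y + S.length by omega) hyl
    (he.take_add_of_occursAt h hS ho' (isCover_self h S) hye hey.le)

theorem isLeftSeed_of_isCover_take (hS : 0 < S.length) {k l : ℕ} (hkl : k ≤ l)
    (hlk : l < U.length - k) (hcov : IsCover r S (U.take (U.length - k)))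
    (hbord : r (U.take l) (U.drop (U.length - l))) : IsLeftSeed r S U := by
  rw [isLeftSeed_iff h]
  by_cases hlS : l < S.length
  · exact ⟨k, l, hkl, hlS, hcov, hbord⟩
  obtain ⟨y, e, hye, hel, hly, ho, he⟩ :=
    hcov.exists_occursAt_straddle h hS (not_lt.1 hlS) hlk (Nat.sub_le _ _)
  refine ⟨min k (l - e), l - y, by omega, by omega, ?_,
    rel_take_drop_sub_of_occursAt h (hcov.rel_take_length h) hbord (by omega) ho (by omega) hly⟩
  rcases le_total k (l - e) with hk | hk
  · rwa [min_eq_left hk]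
  -- the border carries the `S`-covered prefix `U.take e` to the end of `U`
  have hlen : (U.take e).length = e := List.length_take_of_le (by omega)
  have hoe : OccursAt r (U.take e) U (U.length - l) :=
    ⟨by omega, by simpa [hlen, List.take_take, hel] using h.rel_take hbord e⟩
  rw [min_eq_right hk, show U.length - (l - e) = U.length - l + (U.take e).length by omega]
  exact hcov.take_add_of_occursAt h hS hoe he (by omega) (by omega)

theorem IsLeftSeed.of_isCover (hS : 0 < S.length) (hSM : IsCover r S M)
    (hMU : IsLeftSeed r M U) : IsLeftSeed r S U := by
  obtain ⟨k, l, hkl, hlM, hcov, hbord⟩ := (isLeftSeed_iff h).1 hMU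
  have hMU' := (hcov.isBorder h).1
  simp only [List.length_take] at hMU'
  exact isLeftSeed_of_isCover_take h hS hkl (by omega) (hSM.trans h hS hcov) hbord

end LeftSeeds

section Arrays

variable {r : List α → List α → Prop} {T : List α} {L : ℕ → ℕ} {m : ℕ}

theorem LCoverArr.eq_of_isLongestProperCover (hL : LCoverArr r T L) (hm1 : 1 ≤ m)
    (hmT : m ≤ T.length) {j : ℕ} (hj : IsLongestProperCover r (T.take j) (T.take m)) :
    L m = j := by
  have hjT : (T.take j).length = j := by
    have := hj.1.2
    simp only [List.length_take] at this ⊢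
    omega
  refine (hL m hm1 hmT).unique ⟨Or.inr ⟨_, hjT, hj.1⟩, ?_⟩
  rintro c (rfl | ⟨C, rfl, hC⟩)
  · exact Nat.zero_le _
  · exact hjT ▸ hj.2 C hC

theorem LCoverArr.isCover_take (h : SCER r) (hL : LCoverArr r T L) (hm1 : 1 ≤ m)
    (hmT : m ≤ T.length) (hpos : 0 < L m) : IsCover r (T.take (L m)) (T.take m) := by
  obtain h0 | ⟨C, hCL, hC, -⟩ := (hL m hm1 hmT).1
  · omega
  · rw [← hCL]
    exact hC.congr_left h (hC.rel_take_length h)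

end Arrays

theorem stmt15 (r : List α → List α → Prop) (h : SCER r) (T : List α) (Bd L : ℕ → ℕ)
    (hB : BorderArr r T Bd) (hL : LCoverArr r T L) (i j : ℕ)
    (h1 : 1 ≤ i) (h2 : i ≤ T.length) (h3 : 1 ≤ j) (h4 : j < i - Bd i) :
    IsLeftSeed r (T.take j) (T.take i) ↔
      ∃ m, 1 ≤ m ∧ m ≤ i ∧ L m = j ∧ IsLeftSeed r (T.take m) (T.take i) := by
  have hTi : (T.take i).length = i := List.length_take_of_le h2
  have hTj : (T.take j).length = j := List.length_take_of_le (by omega)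
  constructor
  · intro hseed
    obtain ⟨k, l, hkl, hlj, hcov, hbord⟩ := (isLeftSeed_iff h).1 hseed
    have hlB : l ≤ Bd i := (hB i h1 h2).2
      ⟨_, List.length_take_of_le (by omega), by omega, isBorder_take h (by omega) hbord⟩
    rw [hTi, List.take_take, min_eq_left (Nat.sub_le i k)] at hcov
    obtain ⟨m, hm, hlong, hmcov⟩ := hcov.exists_take_isLongestProperCover h (by omega)
      (by simp only [List.length_take]; omega)
    rw [List.length_take_of_le (by omega)] at hm
    rw [List.take_take, min_eq_left hm] at hlong hmcov
    have hjm := hlong.1.2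
    rw [hTj, List.length_take_of_le (by omega)] at hjm
    refine ⟨m, by omega, by omega, hL.eq_of_isLongestProperCover (by omega) (by omega) hlong,
      (isLeftSeed_iff h).2 ⟨k, l, hkl, by simp only [List.length_take]; omega, ?_, hbord⟩⟩
    rwa [hTi, List.take_take, min_eq_left (Nat.sub_le i k)]
  · rintro ⟨m, hm1, hmi, rfl, hseed⟩
    exact hseed.of_isCover h (by omega) (hL.isCover_take h hm1 (by omega) (by omega))
end
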